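/- arXiv:2011.08253 — 2 statements merged into one kernel-verified Lean document; each statement's English description precedes it below -/
import Mathlib

section
/- If a learner a is entangled with any learner b, then a is entangled with itself (i.e., a is accurate). -/
theorem entangled_implies_accurate
    {Acceptor Learner : Type}
    (E : Learner → Learner → Set (Set Acceptor))
    (hundirected : ∀ a b : Learner, E a b = E b a)
    (hcondensed : ∀ a b c : Learner, E a b ∩ E b c ⊆ E a c)
    (S : Set Acceptor) (a b : Learner)
    (h : S ∈ E a b) :
    S ∈ E a a :=
  hcondensed a b a ⟨h, hundirected a b ▸ h⟩
end

section
/- Two decisions in the same ballot have equal values: if Decision_a(q_a), Decision_b(q_b), and B(q_a) = B(q_b), then V(q_a) = V(q_b). -/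
theorem value_eq_of_ballot_eq {Message Value : Type} {is1a : Message → Prop}
    {ballot : Message → ℕ} {value : Message → Value} {get1a : Message → Message}
    {B : Message → ℕ} {V : Message → Value}
    (hunique : ∀ m m' : Message, is1a m → is1a m' → ballot m = ballot m' → m = m')
    (his1a : ∀ x : Message, is1a (get1a x))
    (hB : ∀ m : Message, B m = ballot (get1a m)) (hV : ∀ m : Message, V m = value (get1a m))
    {x y : Message} (h : B x = B y) : V x = V y := by
  have hget1a_eq : get1a x = get1a y :=
    hunique _ _ (his1a x) (his1a y) (by rwa [hB, hB] at h)
  rw [hV, hV, hget1a_eq]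

theorem same_ballot_decisions_same_value_general
    {Message Value : Type}
    (is1a : Message → Prop)
    (tran : Message → Set Message)
    (ballot : Message → ℕ) (value : Message → Value)
    (get1a : Message → Message)
    (hget1a : ∀ x : Message, (∃ m ∈ tran x, is1a m) →
      is1a (get1a x) ∧ get1a x ∈ tran x ∧
      ∀ m ∈ tran x, is1a m → ballot m ≤ ballot (get1a x))
    (hsome1a : ∀ m : Message, ∃ m' ∈ tran m, is1a m')
    -- each 1a has a unique ballot number
    (hunique : ∀ m m' : Message, is1a m → is1a m' → ballot m = ballot m' → m = m')
    (B : Message → ℕ) (hB : ∀ m : Message, B m = ballot (get1a m))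
    (V : Message → Value) (hV : ∀ m : Message, V m = value (get1a m))
    (qa qb : Set Message)
    -- the two decisions share a ballot: B(q_a) = B(q_b)
    (hballots : ∀ m ∈ qa, ∀ m' ∈ qb, B m = B m') :
    ∀ m ∈ qa, ∀ m' ∈ qb, V m = V m' := by
  intro m hm m' hm'
  exact value_eq_of_ballot_eq hunique (fun x => (hget1a x (hsome1a x)).1) hB hV
    (hballots m hm m' hm')

theorem same_ballot_decisions_same_value
    {Message Value Learner Acceptor : Type}
    (is1a is2a : Message → Prop)
    (tran : Message → Set Message)
    (sig : Message → Acceptor) (lrn : Message → Learner)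
    (ballot : Message → ℕ) (value : Message → Value)
    (Q : Learner → Set (Set Acceptor))
    (get1a : Message → Message)
    (hget1a : ∀ x : Message, (∃ m ∈ tran x, is1a m) →
      is1a (get1a x) ∧ get1a x ∈ tran x ∧
      ∀ m ∈ tran x, is1a m → ballot m ≤ ballot (get1a x))
    (hsome1a : ∀ m : Message, ∃ m' ∈ tran m, is1a m')
    -- each 1a has a unique ballot number
    (hunique : ∀ m m' : Message, is1a m → is1a m' → ballot m = ballot m' → m = m')
    (B : Message → ℕ) (hB : ∀ m : Message, B m = ballot (get1a m))
    (V : Message → Value) (hV : ∀ m : Message, V m = value (get1a m))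
    (a b : Learner) (qa qb : Set Message)
    (hdeca : qa.Nonempty ∧ (∀ m ∈ qa, is2a m ∧ lrn m = a) ∧
      (∀ m ∈ qa, ∀ m' ∈ qa, B m = B m') ∧ sig '' qa ∈ Q a)
    (hdecb : qb.Nonempty ∧ (∀ m ∈ qb, is2a m ∧ lrn m = b) ∧
      (∀ m ∈ qb, ∀ m' ∈ qb, B m = B m') ∧ sig '' qb ∈ Q b)
    -- the two decisions share a ballot: B(q_a) = B(q_b)
    (hballots : ∀ m ∈ qa, ∀ m' ∈ qb, B m = B m') :
    ∀ m ∈ qa, ∀ m' ∈ qb, V m = V m' :=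
  same_ballot_decisions_same_value_general is1a tran ballot value get1a hget1a hsome1a hunique B hB
    V hV qa qb hballots
end
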